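/- Let (Ω, 𝔉, P) be a probability space, α ∈ [0,1], and β : Ω → ℝ a Bernoulli random variable with parameter α. Let e, w : Ω → ℝⁿ and v, v₋ : Ω → ℝᵐ be square-integrable random vectors with E[e] = 0, E[w] = 0, E[v] = 0, E[v₋] = 0, second moments E[e eᵀ] = Σ, E[w wᵀ] = Q, cross moments E[e wᵀ] = Q, E[e vᵀ] = 0, E[e v₋ᵀ] = 0, and suppose β is independent of the tuple (e, w, v, v₋). Let C and θ be m×n matrices, x̂ ∈ ℝⁿ a fixed vector, and define x := x̂ + e and y := (1−β)(C x + v) + β(θ(x − w) + v₋). Then the cross covariance satisfies: E[(x − x̂)(y − E y)ᵀ] = Σ((1−α)C + α θ)ᵀ − α Q θᵀ. -/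

import Mathlib

open MeasureTheory Matrix ProbabilityTheory

/-- Cross second-moment matrix `E[u zᵀ]` (entrywise integrals). -/
noncomputable def crossMoment {Ω : Type*} [MeasurableSpace Ω] (P : Measure Ω)
    {d₁ d₂ : ℕ} (u : Ω → (Fin d₁ → ℝ)) (z : Ω → (Fin d₂ → ℝ)) :
    Matrix (Fin d₁) (Fin d₂) ℝ :=
  Matrix.of fun i j => ∫ ω, u ω i * z ω j ∂P

/-! Centring `y` does not change its cross moment with the centred `e`, and `E[e yᵀ]` is linear
in `y`. Since `β` is independent of the noise, the random switch factors out of the expectation: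
`E[e ((1 - β) A + β B)ᵀ] = (1 - α) E[e Aᵀ] + α E[e Bᵀ]` with `A = C x + v` and
`B = θ (x - w) + v₋`. Finally `E[e Aᵀ] = Σ Cᵀ` and `E[e Bᵀ] = (Σ - Q) θᵀ`, because `e` is centred
and uncorrelated with `v` and `v₋`. -/

section

variable {Ω : Type*} [MeasurableSpace Ω] {P : Measure Ω} {g : Ω → ℝ}

theorem MeasureTheory.MemLp.matrix_mulVec {p : ENNReal} {ι κ : Type*} [Fintype ι] [Fintype κ]
    (M : Matrix κ ι ℝ) {f : Ω → ι → ℝ} (hf : MemLp f p P) : MemLp (fun ω => M *ᵥ f ω) p P :=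
  (Matrix.mulVecLin M).toContinuousLinearMap.comp_memLp' hf

theorem memLp_top_of_forall_eq_zero_or_one (hg : Measurable g)
    (hg01 : ∀ ω, g ω = 0 ∨ g ω = 1) : MemLp g ⊤ P :=
  memLp_top_of_bound hg.aestronglyMeasurable 1 <| ae_of_all _ fun ω => by
    rcases hg01 ω with h | h <;> simp [h]

theorem integral_eq_measureReal_of_forall_eq_zero_or_one (hg : Measurable g)
    (hg01 : ∀ ω, g ω = 0 ∨ g ω = 1) :
    ∫ ω, g ω ∂P = P.real {ω | g ω = 1} := by
  have hg_ind : g = {ω | g ω = 1}.indicator 1 := by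
    ext ω; rcases hg01 ω with h | h <;> simp [h]
  conv_lhs => rw [hg_ind]
  exact integral_indicator_one (hg (measurableSet_singleton 1))

variable {d₁ d₂ d₃ : ℕ} {u : Ω → Fin d₁ → ℝ} {z z₁ z₂ a b : Ω → Fin d₂ → ℝ}

theorem integrable_mul_apply_of_memLp_two (hu : MemLp u 2 P) (hz : MemLp z 2 P)
    (i : Fin d₁) (j : Fin d₂) : Integrable (fun ω => u ω i * z ω j) P :=
  (hu.eval i).integrable_mul (hz.eval j)

theorem crossMoment_add_right (hu : MemLp u 2 P) (hz₁ : MemLp z₁ 2 P) (hz₂ : MemLp z₂ 2 P) :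
    crossMoment P u (fun ω => z₁ ω + z₂ ω) = crossMoment P u z₁ + crossMoment P u z₂ := by
  ext i j
  simp only [crossMoment, of_apply, Matrix.add_apply, Pi.add_apply, mul_add]
  exact integral_add (integrable_mul_apply_of_memLp_two hu hz₁ i j)
    (integrable_mul_apply_of_memLp_two hu hz₂ i j)

theorem crossMoment_sub_right (hu : MemLp u 2 P) (hz₁ : MemLp z₁ 2 P) (hz₂ : MemLp z₂ 2 P) :
    crossMoment P u (fun ω => z₁ ω - z₂ ω) = crossMoment P u z₁ - crossMoment P u z₂ := by
  ext i j
  simp only [crossMoment, of_apply, Matrix.sub_apply, Pi.sub_apply, mul_sub]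
  exact integral_sub (integrable_mul_apply_of_memLp_two hu hz₁ i j)
    (integrable_mul_apply_of_memLp_two hu hz₂ i j)

theorem crossMoment_mulVec_right (M : Matrix (Fin d₃) (Fin d₂) ℝ) (hu : MemLp u 2 P)
    (hz : MemLp z 2 P) : crossMoment P u (fun ω => M *ᵥ z ω) = crossMoment P u z * Mᵀ := by
  ext i j
  have hentry : ∀ ω, u ω i * (M *ᵥ z ω) j = ∑ k, u ω i * z ω k * M j k := fun ω => by
    simp only [mulVec, dotProduct, Finset.mul_sum]
    exact Finset.sum_congr rfl fun k _ => by ring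
  simp only [crossMoment, of_apply, mul_apply, transpose_apply, hentry]
  rw [integral_finsetSum _ fun k _ => (integrable_mul_apply_of_memLp_two hu hz i k).mul_const _]
  simp only [integral_mul_const]

theorem crossMoment_const_right (hu : Integrable u P) (c : Fin d₂ → ℝ) :
    crossMoment P u (fun _ => c) = vecMulVec (∫ ω, u ω ∂P) c := by
  ext i j
  simp [crossMoment, vecMulVec_apply, eval_integral hu.eval, integral_mul_const]

theorem crossMoment_smul_right_of_indepFun (hg : AEStronglyMeasurable g P)
    (hu : AEStronglyMeasurable u P) (hz : AEStronglyMeasurable z P)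
    (hind : IndepFun g (fun ω => (u ω, z ω)) P) :
    crossMoment P u (fun ω => g ω • z ω) = (∫ ω, g ω ∂P) • crossMoment P u z := by
  ext i j
  have hind_ij : IndepFun g (fun ω => u ω i * z ω j) P :=
    hind.comp measurable_id (((measurable_pi_apply i).comp measurable_fst).mul
      ((measurable_pi_apply j).comp measurable_snd))
  have hprod := hind_ij.integral_fun_mul_eq_mul_integral hg
    (((continuous_apply i).comp_aestronglyMeasurable hu).mul
      ((continuous_apply j).comp_aestronglyMeasurable hz))
  simp only [crossMoment, of_apply, Matrix.smul_apply, Pi.smul_apply, smul_eq_mul]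
  rw [← hprod]
  congr 1 with ω
  ring

theorem MeasureTheory.MemLp.one_sub_smul_add_smul (hg : MemLp g ⊤ P) (ha : MemLp a 2 P)
    (hb : MemLp b 2 P) :
    MemLp (fun ω => (1 - g ω) • a ω + g ω • b ω) 2 P :=
  (ha.smul ((memLp_top_const 1).sub hg)).add (hb.smul hg)

theorem crossMoment_one_sub_smul_add_smul_of_indepFun [IsProbabilityMeasure P]
    (hg : MemLp g ⊤ P) (hu : MemLp u 2 P) (ha : MemLp a 2 P) (hb : MemLp b 2 P)
    (hind : IndepFun g (fun ω => (u ω, a ω, b ω)) P) :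
    crossMoment P u (fun ω => (1 - g ω) • a ω + g ω • b ω)
      = (1 - ∫ ω, g ω ∂P) • crossMoment P u a + (∫ ω, g ω ∂P) • crossMoment P u b := by
  have h1g : MemLp (fun ω => 1 - g ω) ⊤ P := (memLp_top_const 1).sub hg
  have hind_a : IndepFun (fun ω => 1 - g ω) (fun ω => (u ω, a ω)) P :=
    hind.comp (measurable_const.sub measurable_id) (measurable_fst.prodMk measurable_snd.fst)
  have hind_b : IndepFun g (fun ω => (u ω, b ω)) P :=
    hind.comp measurable_id (measurable_fst.prodMk measurable_snd.snd)
  rw [crossMoment_add_right (z₁ := fun ω => (1 - g ω) • a ω) (z₂ := fun ω => g ω • b ω) hu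
      (ha.smul h1g) (hb.smul hg),
    crossMoment_smul_right_of_indepFun h1g.1 hu.1 ha.1 hind_a,
    crossMoment_smul_right_of_indepFun hg.1 hu.1 hb.1 hind_b,
    integral_sub (integrable_const 1) (hg.integrable le_top), integral_const, probReal_univ,
    one_smul]

theorem crossMoment_sub_const_right_of_integral_eq_zero [IsFiniteMeasure P] (hu : MemLp u 2 P)
    (hu0 : ∫ ω, u ω ∂P = 0) (ha : MemLp a 2 P) (c : Fin d₂ → ℝ) :
    crossMoment P u (fun ω => a ω - c) = crossMoment P u a := by
  rw [crossMoment_sub_right hu ha (memLp_const c),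
    crossMoment_const_right (hu.integrable one_le_two), hu0, zero_vecMulVec, sub_zero]

end

theorem delayed_measurement_cross_covariance_general (n m : ℕ)
    {Ω : Type*} [MeasurableSpace Ω] (P : Measure Ω) [IsProbabilityMeasure P]
    (α : ℝ) (hα0 : 0 ≤ α)
    (β : Ω → ℝ) (hβmeas : Measurable β)
    (hβ01 : ∀ ω, β ω = 0 ∨ β ω = 1)
    (hβα : P {ω | β ω = 1} = ENNReal.ofReal α)
    (e w : Ω → (Fin n → ℝ)) (v vm : Ω → (Fin m → ℝ))
    (he2 : MemLp e 2 P) (hw2 : MemLp w 2 P)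
    (hv2 : MemLp v 2 P) (hvm2 : MemLp vm 2 P)
    (hezero : (∫ ω, e ω ∂P) = 0)
    (Sig Q : Matrix (Fin n) (Fin n) ℝ)
    (hee : crossMoment P e e = Sig)
    (hew : crossMoment P e w = Q)
    (hev : crossMoment P e v = 0) (hevm : crossMoment P e vm = 0)
    (hindep : IndepFun β (fun ω => (e ω, w ω, v ω, vm ω)) P)
    (C θ : Matrix (Fin m) (Fin n) ℝ) (xhat : Fin n → ℝ)
    (x : Ω → (Fin n → ℝ)) (hx : x = fun ω => xhat + e ω)
    (y : Ω → (Fin m → ℝ))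
    (hy : y = fun ω => (1 - β ω) • (C.mulVec (x ω) + v ω)
                      + β ω • (θ.mulVec (x ω - w ω) + vm ω)) :
    crossMoment P (fun ω => x ω - xhat) (fun ω => y ω - ∫ ω', y ω' ∂P) =
      Sig * ((1 - α) • C + α • θ)ᵀ - α • (Q * θᵀ) := by
  subst hx hy
  have hβ : MemLp β ⊤ P := memLp_top_of_forall_eq_zero_or_one hβmeas hβ01
  have hEβ : ∫ ω, β ω ∂P = α := by
    rw [integral_eq_measureReal_of_forall_eq_zero_or_one hβmeas hβ01, measureReal_def, hβα,
      ENNReal.toReal_ofReal hα0]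
  have hx : MemLp (fun ω => xhat + e ω) 2 P := (memLp_const xhat).add he2
  have hxw : MemLp (fun ω => xhat + e ω - w ω) 2 P := hx.sub hw2
  have hA : MemLp (fun ω => C *ᵥ (xhat + e ω) + v ω) 2 P := (hx.matrix_mulVec C).add hv2
  have hB : MemLp (fun ω => θ *ᵥ (xhat + e ω - w ω) + vm ω) 2 P :=
    (hxw.matrix_mulVec θ).add hvm2
  have hcov_x : crossMoment P e (fun ω => xhat + e ω) = Sig := by
    rw [crossMoment_add_right he2 (memLp_const xhat) he2,
      crossMoment_const_right (he2.integrable one_le_two), hezero, zero_vecMulVec, hee, zero_add]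
  have hcovA : crossMoment P e (fun ω => C *ᵥ (xhat + e ω) + v ω) = Sig * Cᵀ := by
    rw [crossMoment_add_right he2 (hx.matrix_mulVec C) hv2, crossMoment_mulVec_right C he2 hx,
      hcov_x, hev, add_zero]
  have hcovB : crossMoment P e (fun ω => θ *ᵥ (xhat + e ω - w ω) + vm ω)
      = Sig * θᵀ - Q * θᵀ := by
    rw [crossMoment_add_right he2 (hxw.matrix_mulVec θ) hvm2, crossMoment_mulVec_right θ he2 hxw,
      crossMoment_sub_right he2 hx hw2, hcov_x, hew, hevm, add_zero, Matrix.sub_mul]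
  have hind : IndepFun β (fun ω => (e ω, C *ᵥ (xhat + e ω) + v ω,
      θ *ᵥ (xhat + e ω - w ω) + vm ω)) P :=
    hindep.comp measurable_id (by fun_prop : Continuous fun
      s : (Fin n → ℝ) × (Fin n → ℝ) × (Fin m → ℝ) × (Fin m → ℝ) =>
        (s.1, C *ᵥ (xhat + s.1) + s.2.2.1, θ *ᵥ (xhat + s.1 - s.2.1) + s.2.2.2)).measurable
  simp only [add_sub_cancel_left]
  rw [crossMoment_sub_const_right_of_integral_eq_zero he2 hezero (hβ.one_sub_smul_add_smul hA hB),
    crossMoment_one_sub_smul_add_smul_of_indepFun hβ he2 hA hB hind, hEβ, hcovA, hcovB]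
  simp only [transpose_add, transpose_smul, Matrix.mul_add, Matrix.mul_smul, smul_sub]
  abel

/-- Cross covariance between the state and the randomly
one-step-delayed measurement. -/
theorem delayed_measurement_cross_covariance (n m : ℕ)
    {Ω : Type*} [MeasurableSpace Ω] (P : Measure Ω) [IsProbabilityMeasure P]
    (α : ℝ) (hα0 : 0 ≤ α) (hα1 : α ≤ 1)
    (β : Ω → ℝ) (hβmeas : Measurable β)
    (hβ01 : ∀ ω, β ω = 0 ∨ β ω = 1)
    (hβα : P {ω | β ω = 1} = ENNReal.ofReal α)
    (e w : Ω → (Fin n → ℝ)) (v vm : Ω → (Fin m → ℝ))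
    (hemeas : Measurable e) (hwmeas : Measurable w)
    (hvmeas : Measurable v) (hvmmeas : Measurable vm)
    (he2 : MemLp e 2 P) (hw2 : MemLp w 2 P)
    (hv2 : MemLp v 2 P) (hvm2 : MemLp vm 2 P)
    (hezero : (∫ ω, e ω ∂P) = 0) (hwzero : (∫ ω, w ω ∂P) = 0)
    (hvzero : (∫ ω, v ω ∂P) = 0) (hvmzero : (∫ ω, vm ω ∂P) = 0)
    (Sig Q : Matrix (Fin n) (Fin n) ℝ)
    (hee : crossMoment P e e = Sig) (hww : crossMoment P w w = Q)
    (hew : crossMoment P e w = Q)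
    (hev : crossMoment P e v = 0) (hevm : crossMoment P e vm = 0)
    (hindep : IndepFun β (fun ω => (e ω, w ω, v ω, vm ω)) P)
    (C θ : Matrix (Fin m) (Fin n) ℝ) (xhat : Fin n → ℝ)
    (x : Ω → (Fin n → ℝ)) (hx : x = fun ω => xhat + e ω)
    (y : Ω → (Fin m → ℝ))
    (hy : y = fun ω => (1 - β ω) • (C.mulVec (x ω) + v ω)
                      + β ω • (θ.mulVec (x ω - w ω) + vm ω)) :
    crossMoment P (fun ω => x ω - xhat) (fun ω => y ω - ∫ ω', y ω' ∂P) =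
      Sig * ((1 - α) • C + α • θ)ᵀ - α • (Q * θᵀ) :=
  delayed_measurement_cross_covariance_general n m P α hα0 β hβmeas hβ01 hβα e w v vm he2 hw2 hv2
    hvm2 hezero Sig Q hee hew hev hevm hindep C θ xhat x hx y hy
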